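/- arXiv:1206.0277 — 6 statements merged into one kernel-verified Lean document; each statement's English description precedes it below -/
import Mathlib

section
/- Let N ≥ 2 be a natural number and let θ : Fin N → ℝ be arbitrary. Then there exist distinct indices i, j in Fin N such that cos(2(θ_i − θ_j)) ≥ cos(2π/N). -/
/-!
Read the angles modulo `π`, as `N` points on the circle `ℝ/πℤ` of length `π`. If all pairwise
distances exceeded `π/N`, the closed arcs of length `π/N` centred at the points would be
pairwise disjoint; their total length is `π`, so they would cover the circle by `N ≥ 2`
disjoint nonempty closed sets, contradicting connectedness. Since `cos (2·)` is even,
`π`-periodic and decreasing on `[0, π/2]`, two angles at distance at most `π/N` modulo `π`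
satisfy `cos (2 (θᵢ - θⱼ)) ≥ cos (2π/N)`.
-/

open Real

open Function MeasureTheory Metric Set in
theorem NormedAddCommGroup.exists_ne_norm_sub_le {A ι : Type*} [NormedAddCommGroup A]
    [CompactSpace A] [PreconnectedSpace A] [MeasurableSpace A] [BorelSpace A] {μ : Measure A}
    [μ.IsAddHaarMeasure] [Fintype ι] [Nontrivial ι] (x : ι → A) {δ : ℝ} (hδ₀ : 0 ≤ δ)
    (hδ : μ univ ≤ Fintype.card ι • μ (closedBall (0 : A) (δ / 2))) :
    ∃ i j, i ≠ j ∧ ‖x i - x j‖ ≤ δ := by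
  by_contra! hfar
  let B : ι → Set A := fun i ↦ closedBall (x i) (δ / 2)
  have hB_closed : ∀ i, IsClosed (B i) := fun _ ↦ isClosed_closedBall
  have hB_disjoint : Pairwise (Disjoint on B) := by
    intro i j hij
    apply closedBall_disjoint_closedBall
    rw [dist_eq_norm]
    linarith [hfar i j hij]
  have hB_cover : ⋃ i, B i = univ := by
    rw [← (isClosed_iUnion_of_finite hB_closed).measure_eq_univ_iff_eq (μ := μ)]
    refine le_antisymm (measure_mono (subset_univ _)) ?_
    simpa only [measure_iUnion hB_disjoint fun _ ↦ measurableSet_closedBall, tsum_fintype, B,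
      μ.addHaar_closedBall_center, Finset.sum_const, Finset.card_univ] using hδ
  have hB_nonempty : ∀ i, (B i).Nonempty := fun _ ↦ nonempty_closedBall.2 (by linarith)
  exact not_subsingleton ι
    (subsingleton_of_disjoint_isClosed_iUnion_eq_univ hB_nonempty hB_disjoint hB_closed hB_cover)

theorem Real.cos_two_mul_le_of_norm_coe_le {s r : ℝ} (hr : r ≤ π / 2)
    (hs : ‖(s : AddCircle π)‖ ≤ r) : cos (2 * r) ≤ cos (2 * s) := by
  set k := round (π⁻¹ * s)
  rw [AddCircle.norm_eq] at hs
  have hcos : cos (2 * s) = cos (2 * |s - k * π|) := by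
    rw [← abs_two, ← abs_mul, cos_abs, abs_two, ← cos_sub_int_mul_two_pi (2 * s) k]
    ring_nf
  rw [hcos]
  exact cos_le_cos_of_nonneg_of_le_pi (by positivity) (by linarith) (by linarith)

theorem stmt_3 (N : ℕ) (hN : 2 ≤ N) (θ : Fin N → ℝ) :
    ∃ i j : Fin N, i ≠ j ∧
      Real.cos (2 * (θ i - θ j)) ≥ Real.cos (2 * Real.pi / N) := by
  have : Fact (0 < π) := ⟨pi_pos⟩
  have : Nontrivial (Fin N) := Fin.nontrivial_iff_two_le.2 hN
  have hN₀ : (0 : ℝ) < N := by positivity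
  have h2N : (2 : ℝ) ≤ N := by exact_mod_cast hN
  have hvol : (MeasureTheory.volume : MeasureTheory.Measure (AddCircle π)) Set.univ ≤
      N • MeasureTheory.volume (Metric.closedBall (0 : AddCircle π) (π / N / 2)) := by
    rw [AddCircle.measure_univ, AddCircle.volume_closedBall, mul_div_cancel₀ _ two_ne_zero,
      min_eq_right (div_le_self pi_pos.le (by linarith)), ← ENNReal.ofReal_nsmul, nsmul_eq_mul,
      mul_div_cancel₀ _ hN₀.ne']
  obtain ⟨i, j, hij, hclose⟩ := NormedAddCommGroup.exists_ne_norm_sub_le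
    (fun i ↦ (θ i : AddCircle π)) (δ := π / N) (by positivity) (by rwa [Fintype.card_fin])
  refine ⟨i, j, hij, ?_⟩
  rw [mul_div_assoc]
  refine cos_two_mul_le_of_norm_coe_le ?_ (by simpa only [AddCircle.coe_sub] using hclose)
  rw [div_le_div_iff₀ hN₀ two_pos]
  nlinarith [pi_pos]
end

section
/- Let N ≥ 2 be a natural number and define θ : Fin N → ℝ by θ_i = π·i/N (i.e., the angles 0, π/N, 2π/N, …, (N−1)π/N). Then for all distinct indices i, j in Fin N, cos(2(θ_i − θ_j)) ≤ cos(2π/N). -/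
open Real

/-- Reflecting through `π`: `|x - π| ≤ π - a` and cosine is decreasing on `[0, π]`. -/
theorem Real.cos_le_cos_of_le_of_le_two_pi_sub {a x : ℝ} (ha : 0 ≤ a) (hax : a ≤ x)
    (hxa : x ≤ 2 * π - a) : cos x ≤ cos a := by
  have hdist : |x - π| ≤ π - a := abs_le.mpr ⟨by linarith, by linarith⟩
  have hreflect : cos (π - a) ≤ cos (x - π) := by
    rw [← cos_abs (x - π)]
    exact cos_le_cos_of_nonneg_of_le_pi (abs_nonneg _) (by linarith) hdist
  rw [cos_pi_sub, cos_sub_pi] at hreflect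
  linarith

theorem Real.cos_two_pi_mul_div_le {N : ℕ} {k : ℤ} (hk : k ≠ 0) (hkN : |k| < N) :
    cos (2 * π * k / N) ≤ cos (2 * π / N) := by
  have hN : (0 : ℝ) < N := by exact_mod_cast (abs_pos.mpr hk).trans hkN
  have hk_one : (1 : ℝ) ≤ |(k : ℝ)| := by exact_mod_cast Int.one_le_abs hk
  have hk_lt : |(k : ℝ)| + 1 ≤ N := by exact_mod_cast Int.add_one_le_of_lt hkN
  rw [← cos_abs, abs_div, abs_mul, abs_of_pos two_pi_pos, Nat.abs_cast]
  apply cos_le_cos_of_le_of_le_two_pi_sub (by positivity)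
  · rw [div_le_div_iff_of_pos_right hN]
    nlinarith [pi_pos]
  · rw [div_le_iff₀ hN, sub_mul, div_mul_cancel₀ _ hN.ne']
    nlinarith [pi_pos]

theorem stmt_4_general (N : ℕ) (θ : Fin N → ℝ)
    (hθ : ∀ i : Fin N, θ i = Real.pi * (i : ℕ) / N) :
    ∀ i j : Fin N, i ≠ j →
      Real.cos (2 * (θ i - θ j)) ≤ Real.cos (2 * Real.pi / N) := by
  intro i j hij
  have hval : (i : ℕ) ≠ j := Fin.val_injective.ne hij
  have hangle : 2 * (θ i - θ j) = 2 * π * (((i : ℕ) - (j : ℕ) : ℤ) : ℝ) / N := by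
    rw [hθ i, hθ j]
    push_cast
    ring
  rw [hangle]
  apply cos_two_pi_mul_div_le (by omega)
  rw [abs_lt]
  constructor <;> omega

theorem stmt_4 (N : ℕ) (hN : 2 ≤ N) (θ : Fin N → ℝ)
    (hθ : ∀ i : Fin N, θ i = Real.pi * (i : ℕ) / N) :
    ∀ i j : Fin N, i ≠ j →
      Real.cos (2 * (θ i - θ j)) ≤ Real.cos (2 * Real.pi / N) :=
  stmt_4_general N θ hθ
end

section
/- Let t₁, t₂, t₃ be real numbers with t₁ ≤ t₂ ≤ t₃ and t₃ − t₁ ≤ π. Then cos(t₁ − t₂) + cos(t₂ − t₃) + cos(t₁ − t₃) ≥ 1 + 2·cos(t₃ − t₁), with equality when t₂ = t₁ or t₂ = t₃. -/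
open Real

theorem cos_add_cos_sub_cos_add_sub_one (a b : ℝ) :
    cos a + cos b - cos (a + b) - 1 = 4 * sin (a / 2) * sin (b / 2) * cos ((a + b) / 2) := by
  obtain ⟨x, rfl⟩ : ∃ x, a = 2 * x := ⟨a / 2, by ring⟩
  obtain ⟨y, rfl⟩ : ∃ y, b = 2 * y := ⟨b / 2, by ring⟩
  rw [show 2 * x / 2 = x by ring, show 2 * y / 2 = y by ring,
    show (2 * x + 2 * y) / 2 = x + y by ring, ← mul_add]
  simp only [cos_two_mul, cos_add]
  linear_combination 2 * sin y ^ 2 * sin_sq_add_cos_sq x + 2 * (1 - cos x ^ 2) * sin_sq_add_cos_sq y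

theorem one_add_cos_add_le_cos_add_cos {a b : ℝ} (ha : 0 ≤ a) (hb : 0 ≤ b) (hab : a + b ≤ π) :
    1 + cos (a + b) ≤ cos a + cos b := by
  have hsa : 0 ≤ sin (a / 2) := sin_nonneg_of_nonneg_of_le_pi (by linarith) (by linarith [pi_pos])
  have hsb : 0 ≤ sin (b / 2) := sin_nonneg_of_nonneg_of_le_pi (by linarith) (by linarith [pi_pos])
  have hc : 0 ≤ cos ((a + b) / 2) := cos_nonneg_of_mem_Icc ⟨by linarith [pi_pos], by linarith⟩
  have := cos_add_cos_sub_cos_add_sub_one a b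
  linarith [mul_nonneg (mul_nonneg hsa hsb) hc]

theorem stmt_6 (t₁ t₂ t₃ : ℝ) (h12 : t₁ ≤ t₂) (h23 : t₂ ≤ t₃)
    (hspan : t₃ - t₁ ≤ Real.pi) :
    Real.cos (t₁ - t₂) + Real.cos (t₂ - t₃) + Real.cos (t₁ - t₃) ≥
      1 + 2 * Real.cos (t₃ - t₁) ∧
    ((t₂ = t₁ ∨ t₂ = t₃) →
      Real.cos (t₁ - t₂) + Real.cos (t₂ - t₃) + Real.cos (t₁ - t₃) =
        1 + 2 * Real.cos (t₃ - t₁)) := by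
  constructor
  · have key := one_add_cos_add_le_cos_add_cos (sub_nonneg.2 h12) (sub_nonneg.2 h23)
      (by linarith)
    rw [sub_add_sub_cancel'] at key
    rw [← neg_sub t₂ t₁, ← neg_sub t₃ t₂, ← neg_sub t₃ t₁, cos_neg, cos_neg, cos_neg]
    linarith
  · rintro (rfl | rfl) <;> simp only [sub_self, cos_zero, cos_sub] <;> ring
end

section
/- Let N ≥ 4 be an even natural number and define θ : Fin N → ℝ by θ_i = 2π·i/N. Then for all pairwise distinct indices i, j, l in Fin N, cos(2(θ_i − θ_j)) + cos(2(θ_j − θ_l)) + cos(2(θ_i − θ_l)) ≤ 1 + 2·cos(4π/N). -/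
/-!
With `N = 2M`, the angle `2(θ_i - θ_j)` equals `2π(i - j)/M`, and `cos (2πk/M) ≤ cos (2π/M)` whenever
`M ∤ k`, since `2πk/M` is congruent modulo `2π` to a point of `[2π/M, 2π - 2π/M]`. For three distinct
indices in `[0, 2M)`, at most one of the differences `i - j`, `j - l`, `i - l` is divisible by `M`: two of
them would force all three to be `±M`, yet the third is the sum or difference of the other two. So one
cosine is at most `1` and the other two at most `cos (2π/M) = cos (4π/N)`.
-/

open Real

lemma cos_two_pi_mul_div_le {M : ℕ} {s : ℝ} (hs : 1 ≤ s) (hsM : 2 * s ≤ M) :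
    cos (2 * π * s / M) ≤ cos (2 * π / M) := by
  have hM : (0 : ℝ) < M := by linarith
  apply cos_le_cos_of_nonneg_of_le_pi (by positivity)
  · rw [div_le_iff₀ hM]; nlinarith [pi_pos]
  · exact div_le_div_of_nonneg_right (by nlinarith [pi_pos]) hM.le

lemma cos_two_pi_mul_emod_div (M : ℕ) (k : ℤ) :
    cos (2 * π * k / M) = cos (2 * π * (k % M : ℤ) / M) := by
  rcases eq_or_ne M 0 with rfl | hM
  · simp
  have hk : (k : ℝ) = (k % M : ℤ) + M * (k / M : ℤ) := by
    exact_mod_cast (Int.emod_add_mul_ediv k M).symm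
  have harg : 2 * π * k / M = 2 * π * (k % M : ℤ) / M + (k / M : ℤ) * (2 * π) := by
    rw [hk]; field_simp
  rw [harg, cos_add_int_mul_two_pi]

lemma cos_two_pi_mul_sub_div (M : ℕ) (r : ℝ) : cos (2 * π * (M - r) / M) = cos (2 * π * r / M) := by
  rcases eq_or_ne M 0 with rfl | hM
  · simp
  rw [← cos_two_pi_sub]
  congr 1
  field_simp
  ring

lemma cos_two_pi_int_mul_div_le {M : ℕ} {k : ℤ} (hk : ¬ (M : ℤ) ∣ k) :
    cos (2 * π * k / M) ≤ cos (2 * π / M) := by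
  rcases Nat.eq_zero_or_pos M with rfl | hM
  · simp
  have hMz : (0 : ℤ) < M := by exact_mod_cast hM
  set r := k % M with hr
  have hr0 : 0 < r := lt_of_le_of_ne (Int.emod_nonneg k hMz.ne')
    (fun h => hk (Int.dvd_of_emod_eq_zero h.symm))
  have hrM : r < M := Int.emod_lt_of_pos k hMz
  rw [cos_two_pi_mul_emod_div, ← hr]
  rcases le_or_gt (2 * r) M with hr2 | hr2
  · exact cos_two_pi_mul_div_le (by exact_mod_cast hr0) (by exact_mod_cast hr2)
  · rw [← cos_two_pi_mul_sub_div]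
    have hs := cos_two_pi_mul_div_le (M := M) (s := ((M - r : ℤ) : ℝ))
      (by exact_mod_cast (by omega : 1 ≤ (M : ℤ) - r))
      (by exact_mod_cast (by omega : 2 * ((M : ℤ) - r) ≤ M))
    push_cast at hs
    exact hs

lemma cos_add_cos_add_cos_le (M : ℕ) {a b : ℤ} (h : ¬ ((M : ℤ) ∣ a ∧ (M : ℤ) ∣ b)) :
    cos (2 * π * a / M) + cos (2 * π * b / M) + cos (2 * π * (a + b : ℤ) / M) ≤
      1 + 2 * cos (2 * π / M) := by
  by_cases ha : (M : ℤ) ∣ a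
  · have hb : ¬ (M : ℤ) ∣ b := fun hb => h ⟨ha, hb⟩
    have hab : ¬ (M : ℤ) ∣ a + b := fun hab => hb ((dvd_add_right ha).mp hab)
    linarith [cos_le_one (2 * π * a / M), cos_two_pi_int_mul_div_le hb,
      cos_two_pi_int_mul_div_le hab]
  by_cases hb : (M : ℤ) ∣ b
  · have hab : ¬ (M : ℤ) ∣ a + b := fun hab => ha ((dvd_add_left hb).mp hab)
    linarith [cos_two_pi_int_mul_div_le ha, cos_le_one (2 * π * b / M),
      cos_two_pi_int_mul_div_le hab]
  by_cases hab : (M : ℤ) ∣ a + b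
  · linarith [cos_two_pi_int_mul_div_le ha, cos_two_pi_int_mul_div_le hb,
      cos_le_one (2 * π * (a + b : ℤ) / M)]
  · linarith [cos_two_pi_int_mul_div_le ha, cos_two_pi_int_mul_div_le hb,
      cos_two_pi_int_mul_div_le hab, cos_le_one (2 * π / M)]

lemma not_dvd_sub_and_dvd_sub {M i j l : ℕ} (hi : i < 2 * M) (hj : j < 2 * M) (hl : l < 2 * M)
    (hij : i ≠ j) (hil : i ≠ l) (hjl : j ≠ l) : ¬ ((M : ℤ) ∣ i - j ∧ (M : ℤ) ∣ j - l) := by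
  rintro ⟨⟨s, hs⟩, ⟨t, ht⟩⟩
  have hst : (i : ℤ) - l = M * (s + t) := by linarith
  have hM : (0 : ℤ) < M := by omega
  have hs2 : -2 < s ∧ s < 2 := ⟨by nlinarith, by nlinarith⟩
  have ht2 : -2 < t ∧ t < 2 := ⟨by nlinarith, by nlinarith⟩
  have hst2 : -2 < s + t ∧ s + t < 2 := ⟨by nlinarith, by nlinarith⟩
  have hs0 : s ≠ 0 := by rintro rfl; omega
  have ht0 : t ≠ 0 := by rintro rfl; omega
  have hst0 : s + t ≠ 0 := by intro h; rw [h, mul_zero] at hst; omega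
  omega

theorem stmt_8_general (N : ℕ) (hNeven : Even N) (θ : Fin N → ℝ)
    (hθ : ∀ i : Fin N, θ i = 2 * Real.pi * (i : ℕ) / N) :
    ∀ i j l : Fin N, i ≠ j → i ≠ l → j ≠ l →
      Real.cos (2 * (θ i - θ j)) + Real.cos (2 * (θ j - θ l)) +
        Real.cos (2 * (θ i - θ l)) ≤ 1 + 2 * Real.cos (4 * Real.pi / N) := by
  intro i j l hij hil hjl
  obtain ⟨M, rfl⟩ := hNeven
  have hM : (M : ℝ) ≠ 0 := by have := i.pos; exact_mod_cast (by omega : M ≠ 0)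
  have hangle : ∀ p q : Fin (M + M), 2 * (θ p - θ q) = 2 * π * ((p : ℤ) - q : ℤ) / M := by
    intro p q
    rw [hθ, hθ]
    push_cast
    field_simp
    ring
  have hfour : 4 * π / ((M + M : ℕ) : ℝ) = 2 * π / M := by push_cast; field_simp; ring
  have hil' : ((i : ℤ) - l : ℤ) = ((i : ℤ) - j) + ((j : ℤ) - l) := by ring
  rw [hangle, hangle, hangle, hfour, hil']
  exact cos_add_cos_add_cos_le M (not_dvd_sub_and_dvd_sub (by omega) (by omega) (by omega)
    (Fin.val_ne_of_ne hij) (Fin.val_ne_of_ne hil) (Fin.val_ne_of_ne hjl))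

theorem stmt_8 (N : ℕ) (hN : 4 ≤ N) (hNeven : Even N) (θ : Fin N → ℝ)
    (hθ : ∀ i : Fin N, θ i = 2 * Real.pi * (i : ℕ) / N) :
    ∀ i j l : Fin N, i ≠ j → i ≠ l → j ≠ l →
      Real.cos (2 * (θ i - θ j)) + Real.cos (2 * (θ j - θ l)) +
        Real.cos (2 * (θ i - θ l)) ≤ 1 + 2 * Real.cos (4 * Real.pi / N) :=
  stmt_8_general N hNeven θ hθ
end

section
/- Let N ≥ 6 be an even natural number and let θ : Fin N → ℝ satisfy: for all pairwise distinct indices i, j, l, cos(2(θ_i − θ_j)) + cos(2(θ_j − θ_l)) + cos(2(θ_i − θ_l)) ≤ 1 + 2·cos(4π/N). Then there exist a real number c and a bijection σ : Fin N → Fin N such that for every i there is an integer k with 2θ_i = c + 4π·σ(i)/N + 2πk; that is, the doubled angles 2θ_i, taken modulo 2π, form (up to a common rotation) exactly the multiset {4π·m/N mod 2π : m = 0, 1, …, N−1}. -/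
/-
Double the angles and regard them as `N = 2M` points on the circle `ℝ/2πℤ`. Listing them
counterclockwise and lifting gives a nondecreasing sequence `Y` with `Y (n + N) = Y n + 2π`.
The identity `cos a + cos b - 1 - cos (a + b) = 4 sin (a/2) sin (b/2) cos ((a + b)/2)` shows that
three consecutive points with gaps `a, b ≥ 0`, `a + b ≤ π`, have cost at least `1 + 2 cos (a + b)`;
hence every two-step gap `Y (n + 2) - Y n` is at least `δ = 4π/N`. The `M` two-step gaps from `Y n`
to `Y (n + N)` add up to `2π = Mδ`, so all of them equal `δ`, and the equality case of the identity
makes one of the two single gaps vanish. Thus the points coincide in pairs at `Y 0 + mδ`,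
`m < M`, which is the uniform design.
-/

open Real Finset Fin.NatCast

theorem cos_add_cos_sub_one_sub_cos_add (a b : ℝ) :
    cos a + cos b - 1 - cos (a + b) = 4 * sin (a / 2) * sin (b / 2) * cos ((a + b) / 2) := by
  have ha : a = 2 * (a / 2) := by ring
  have hb : b = 2 * (b / 2) := by ring
  have hab : (a + b) / 2 = a / 2 + b / 2 := by ring
  conv_lhs => rw [ha, hb, ← mul_add]
  rw [hab, cos_two_mul, cos_two_mul, cos_two_mul, cos_add]
  linear_combination (2 * sin (b / 2) ^ 2) * sin_sq_add_cos_sq (a / 2) +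
    (2 * (1 - cos (a / 2) ^ 2)) * sin_sq_add_cos_sq (b / 2)

-- `F(θ; i, j, l) = tripleCost (2 * θ i) (2 * θ j) (2 * θ l)`
noncomputable def tripleCost (x y z : ℝ) : ℝ := cos (x - y) + cos (y - z) + cos (x - z)

theorem tripleCost_congr {x y z x' y' z' : ℝ} (hx : (x : Real.Angle) = x')
    (hy : (y : Real.Angle) = y') (hz : (z : Real.Angle) = z') :
    tripleCost x y z = tripleCost x' y' z' := by
  simp only [tripleCost, ← Real.Angle.cos_coe, Real.Angle.coe_sub, hx, hy, hz]

theorem tripleCost_sub_one_sub_two_mul_cos (x y z : ℝ) :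
    tripleCost x y z - 1 - 2 * cos (x - z) =
      4 * sin ((y - z) / 2) * sin ((x - y) / 2) * cos ((x - z) / 2) := by
  have hxz : x - z = (y - z) + (x - y) := by ring
  have := cos_add_cos_sub_one_sub_cos_add (y - z) (x - y)
  rw [← hxz] at this
  rw [tripleCost]
  linarith

section OrderedTriple

variable {x y z : ℝ}

theorem one_add_two_mul_cos_sub_le_tripleCost (hyx : y ≤ x) (hzy : z ≤ y) (hxz : x - z ≤ π) :
    1 + 2 * cos (x - z) ≤ tripleCost x y z := by
  have hs₁ : 0 ≤ sin ((y - z) / 2) := sin_nonneg_of_nonneg_of_le_pi (by linarith) (by linarith)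
  have hs₂ : 0 ≤ sin ((x - y) / 2) := sin_nonneg_of_nonneg_of_le_pi (by linarith) (by linarith)
  have hc : 0 ≤ cos ((x - z) / 2) := cos_nonneg_of_mem_Icc ⟨by linarith, by linarith⟩
  linarith [tripleCost_sub_one_sub_two_mul_cos x y z, mul_nonneg (mul_nonneg hs₁ hs₂) hc]

theorem eq_or_eq_of_tripleCost_le (hyx : y ≤ x) (hzy : z ≤ y) (hxz : x - z < π)
    (h : tripleCost x y z ≤ 1 + 2 * cos (x - z)) : x = y ∨ y = z := by
  by_contra! hne
  have hs₁ : 0 < sin ((y - z) / 2) :=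
    sin_pos_of_pos_of_lt_pi (by linarith [hzy.lt_of_ne' hne.2]) (by linarith)
  have hs₂ : 0 < sin ((x - y) / 2) :=
    sin_pos_of_pos_of_lt_pi (by linarith [hyx.lt_of_ne' hne.1]) (by linarith)
  have hc : 0 < cos ((x - z) / 2) := cos_pos_of_mem_Ioo ⟨by linarith, by linarith⟩
  linarith [tripleCost_sub_one_sub_two_mul_cos x y z, mul_pos (mul_pos hs₁ hs₂) hc]

end OrderedTriple

section LiftedConfiguration

variable {Y : ℕ → ℝ} {M : ℕ} {δ : ℝ}

theorem le_sub_of_tripleCost_le (hδ : δ ≤ π) (hY : Monotone Y)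
    (hcost : ∀ n, tripleCost (Y (n + 2)) (Y (n + 1)) (Y n) ≤ 1 + 2 * cos δ) (n : ℕ) :
    δ ≤ Y (n + 2) - Y n := by
  by_contra! hlt
  have h₁ := one_add_two_mul_cos_sub_le_tripleCost (hY (n + 1).le_succ) (hY n.le_succ)
    (by linarith)
  have h₂ : cos δ < cos (Y (n + 2) - Y n) :=
    cos_lt_cos_of_nonneg_of_le_pi (sub_nonneg.2 (hY (by omega))) hδ hlt
  linarith [hcost n]

theorem add_two_eq_of_le_sub (hM : 0 < M) (hper : ∀ n, Y (n + 2 * M) = Y n + M * δ)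
    (hle : ∀ n, δ ≤ Y (n + 2) - Y n) (n : ℕ) : Y (n + 2) = Y n + δ := by
  have hsum : ∑ m ∈ range M, (Y (n + 2 * (m + 1)) - Y (n + 2 * m) - δ) = 0 := by
    rw [sum_sub_distrib, sum_range_sub (fun m ↦ Y (n + 2 * m)), hper]
    simp
  have hnonneg : ∀ m ∈ range M, 0 ≤ Y (n + 2 * (m + 1)) - Y (n + 2 * m) - δ := fun m _ ↦ by
    have h := hle (n + 2 * m)
    rw [show n + 2 * m + 2 = n + 2 * (m + 1) by ring] at h
    linarith
  have := (sum_eq_zero_iff_of_nonneg hnonneg).1 hsum 0 (mem_range.2 hM)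
  simp only [zero_add, mul_one, mul_zero, add_zero] at this
  linarith

theorem add_two_mul_eq (h₂ : ∀ n, Y (n + 2) = Y n + δ) (r m : ℕ) :
    Y (r + 2 * m) = Y r + m * δ := by
  induction m with
  | zero => simp
  | succ m ih =>
    rw [show r + 2 * (m + 1) = r + 2 * m + 2 by ring, h₂, ih]
    push_cast
    ring

theorem eq_add_div_two_mul_of_tripleCost_le (hδ : δ < π) (hY : Monotone Y)
    (hper : ∀ n, Y (n + 2 * M) = Y n + M * δ) (hlast : Y (2 * M - 1) < Y 0 + M * δ)
    (hcost : ∀ n, tripleCost (Y (n + 2)) (Y (n + 1)) (Y n) ≤ 1 + 2 * cos δ) (n : ℕ) :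
    Y n = Y 0 + (n / 2 : ℕ) * δ := by
  have hM : 0 < M := by
    by_contra! hM
    simp_all
  have h₂ := add_two_eq_of_le_sub hM hper (le_sub_of_tripleCost_le hδ.le hY hcost)
  have h₁₀ : Y 1 = Y 0 := by
    have hsplit := eq_or_eq_of_tripleCost_le (hY (1 : ℕ).le_succ) (hY (0 : ℕ).le_succ)
      (by linarith [h₂ 0]) (by simpa [h₂ 0] using hcost 0)
    refine hsplit.resolve_left fun h ↦ ?_
    -- otherwise the odd-indexed points would reach `Y 0 + M * δ`
    have hodd := add_two_mul_eq h₂ 1 (M - 1)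
    rw [show 1 + 2 * (M - 1) = 2 * M - 1 by omega, Nat.cast_pred hM] at hodd
    linarith [h₂ 0]
  conv_lhs => rw [← Nat.mod_add_div n 2, add_two_mul_eq h₂]
  rcases Nat.mod_two_eq_zero_or_one n with h | h <;> simp [h, h₁₀]

end LiftedConfiguration

theorem Fin.natCast_add_ne_natCast_add {N : ℕ} [NeZero N] (n : ℕ) {j k : ℕ} (hj : j < N)
    (hk : k < N) (hjk : j ≠ k) : ((n + j : ℕ) : Fin N) ≠ ((n + k : ℕ) : Fin N) := by
  rw [Ne, Fin.ext_iff, Fin.val_natCast, Fin.val_natCast]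
  intro h
  have := Nat.ModEq.add_left_cancel' n h
  rw [Nat.ModEq, Nat.mod_eq_of_lt hj, Nat.mod_eq_of_lt hk] at this
  exact hjk this

theorem tripleCost_le_of_coe_eq {N : ℕ} [NeZero N] (hN : 3 ≤ N) {φ : Fin N → ℝ} {C : ℝ}
    (hφ : ∀ i j l : Fin N, i ≠ j → i ≠ l → j ≠ l → tripleCost (φ i) (φ j) (φ l) ≤ C)
    {Y : ℕ → ℝ} {τ : Equiv.Perm (Fin N)} (hY : ∀ n : ℕ, (Y n : Real.Angle) = φ (τ n)) (n : ℕ) :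
    tripleCost (Y (n + 2)) (Y (n + 1)) (Y n) ≤ C := by
  have hne (j k : ℕ) (h : j < 3 ∧ k < 3 ∧ j ≠ k) : τ ((n + j : ℕ) : Fin N) ≠ τ ((n + k : ℕ)) :=
    τ.injective.ne (Fin.natCast_add_ne_natCast_add n (by omega) (by omega) h.2.2)
  rw [tripleCost_congr (hY (n + 2)) (hY (n + 1)) (hY n)]
  exact hφ _ _ _ (hne 2 1 (by decide)) (hne 2 0 (by decide)) (hne 1 0 (by decide))

theorem monotone_periodic_extension {N : ℕ} [NeZero N] {y : Fin N → ℝ} {T : ℝ}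
    (hy : Monotone y) (hT : ∀ i j, y i ≤ y j + T) :
    Monotone fun n : ℕ ↦ y n + (n / N : ℕ) * T := by
  intro m n hmn
  rcases (Nat.div_le_div_right hmn (c := N)).eq_or_lt with hq | hq
  · have hmod : (m : Fin N) ≤ n := by
      rw [Fin.le_def, Fin.val_natCast, Fin.val_natCast]
      have := Nat.div_add_mod m N
      have := Nat.div_add_mod n N
      rw [hq] at *
      omega
    simp only [hq]
    linarith [hy hmod]
  · have hq' : ((m / N : ℕ) : ℝ) + 1 ≤ (n / N : ℕ) := by exact_mod_cast hq
    nlinarith [hT (m : Fin N) n, hT 0 0]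

theorem exists_monotone_lift {N : ℕ} [NeZero N] (φ : Fin N → Real.Angle) :
    ∃ (Y : ℕ → ℝ) (τ : Equiv.Perm (Fin N)), Monotone Y ∧ (∀ n, Y (n + N) = Y n + 2 * π) ∧
      Y (N - 1) < Y 0 + 2 * π ∧ ∀ n : ℕ, (Y n : Real.Angle) = φ (τ n) := by
  set x : Fin N → ℝ := fun i ↦ (φ i).toReal
  set y := x ∘ Tuple.sort x
  have hy : ∀ i j, y i < y j + 2 * π := fun i j ↦ by
    simp only [y, x, Function.comp_apply]
    linarith [(φ (Tuple.sort x i)).toReal_le_pi, (φ (Tuple.sort x j)).neg_pi_lt_toReal]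
  refine ⟨fun n ↦ y n + (n / N : ℕ) * (2 * π), Tuple.sort x,
    monotone_periodic_extension (Tuple.monotone_sort x) fun i j ↦ (hy i j).le,
    fun n ↦ ?_, ?_, fun n ↦ ?_⟩
  · simp [Nat.add_div_right n (NeZero.pos N)]
    ring
  · simpa [Nat.div_eq_of_lt (Nat.sub_lt (NeZero.pos N) one_pos)] using hy _ _
  · simp [y, x, Real.Angle.natCast_mul_eq_nsmul, Real.Angle.coe_two_pi]

def finUnshuffle (M : ℕ) : Equiv.Perm (Fin (2 * M)) :=
  (finCongr (mul_comm 2 M)).trans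
    (finProdFinEquiv.symm.trans ((Equiv.prodComm _ _).trans finProdFinEquiv))

theorem finUnshuffle_val (M : ℕ) (k : Fin (2 * M)) :
    (finUnshuffle M k : ℕ) = k / 2 + M * (k % 2) := by
  simp [finUnshuffle]

theorem coe_mul_finUnshuffle {M : ℕ} {δ : ℝ} (hMδ : M * δ = 2 * π) (k : Fin (2 * M)) :
    ((δ * (finUnshuffle M k : ℕ) : ℝ) : Real.Angle) = ((k / 2 : ℕ) * δ : ℝ) := by
  have hshift : δ * (finUnshuffle M k : ℕ) = (k / 2 : ℕ) * δ + (k % 2 : ℕ) * (2 * π) := by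
    rw [finUnshuffle_val]
    push_cast
    linear_combination ((k % 2 : ℕ) : ℝ) * hMδ
  rw [hshift, Real.Angle.coe_add, Real.Angle.natCast_mul_eq_nsmul (2 * π),
    Real.Angle.coe_two_pi, smul_zero, add_zero]

theorem stmt_9 (N : ℕ) (hN : 6 ≤ N) (hNeven : Even N) (θ : Fin N → ℝ)
    (hopt : ∀ i j l : Fin N, i ≠ j → i ≠ l → j ≠ l →
      Real.cos (2 * (θ i - θ j)) + Real.cos (2 * (θ j - θ l)) +
        Real.cos (2 * (θ i - θ l)) ≤ 1 + 2 * Real.cos (4 * Real.pi / N)) :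
    ∃ c : ℝ, ∃ σ : Equiv.Perm (Fin N), ∀ i : Fin N, ∃ k : ℤ,
      2 * θ i = c + 4 * Real.pi * ((σ i : ℕ) : ℝ) / N + 2 * Real.pi * k := by
  obtain ⟨M, rfl⟩ := even_iff_two_dvd.mp hNeven
  have : NeZero (2 * M) := ⟨by omega⟩
  set δ := 4 * π / ((2 * M : ℕ) : ℝ)
  have hMδ : M * δ = 2 * π := by
    have : (M : ℝ) ≠ 0 := by norm_cast; omega
    simp only [δ]
    push_cast
    field_simp
    ring
  have hδ : δ < π := by
    have : (3 : ℝ) ≤ M := by norm_cast; omega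
    nlinarith [pi_pos]
  obtain ⟨Y, τ, hY, hper, hlast, hYθ⟩ := exists_monotone_lift fun i ↦ ((2 * θ i : ℝ) : Real.Angle)
  have hcost := tripleCost_le_of_coe_eq (N := 2 * M) (by omega) (fun i j l hij hil hjl ↦ by
    simpa [tripleCost, mul_sub] using hopt i j l hij hil hjl) hYθ
  have hgrid := eq_add_div_two_mul_of_tripleCost_le hδ hY (M := M) (by simpa [hMδ] using hper)
    (by rwa [hMδ]) hcost
  refine ⟨Y 0, τ.symm.trans (finUnshuffle M), fun i ↦ ?_⟩
  have hangle : ((2 * θ i : ℝ) : Real.Angle) =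
      (Y 0 + 4 * π * ((τ.symm.trans (finUnshuffle M) i : ℕ) : ℝ) / ((2 * M : ℕ) : ℝ) : ℝ) := by
    rw [← div_mul_eq_mul_div, Real.Angle.coe_add, Equiv.trans_apply, coe_mul_finUnshuffle hMδ,
      ← Real.Angle.coe_add, ← hgrid, hYθ, Fin.cast_val_eq_self, Equiv.apply_symm_apply]
  obtain ⟨z, hz⟩ := Real.Angle.angle_eq_iff_two_pi_dvd_sub.1 hangle
  exact ⟨z, by linarith⟩
end

section
/- Let r₁, r₂, r₃, r₄ be real numbers with r₁ ≤ r₂ ≤ r₃ ≤ r₄, r₃ − r₂ < π, and r₄ − r₁ < 2π. Then cos(r₁ − r₂) + cos(r₁ − r₃) + cos(r₂ − r₃) = cos(r₂ − r₃) + cos(r₂ − r₄) + cos(r₃ − r₄) if and only if r₂ − r₁ = r₄ − r₃. -/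
open Real

/-
Pairing the two cosines that involve an outer point, both sides factor through the common
factor `cos ((r₃ - r₂) / 2)`, which is positive because `0 ≤ r₃ - r₂ < π`:
`2 cos (m - r₁) cos ((r₃ - r₂) / 2)` and `2 cos (r₄ - m) cos ((r₃ - r₂) / 2)`, with `m` the
midpoint of `r₂` and `r₃`. The two remaining angles are nonnegative with sum `r₄ - r₁ < 2π`,
and on such pairs the cosine is injective.
-/

lemma Int.eq_zero_of_abs_mul_lt {k : ℤ} {c : ℝ} (hc : 0 < c) (h : |k * c| < c) : k = 0 := by
  rw [abs_mul, abs_of_pos hc, mul_lt_iff_lt_one_left hc] at h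
  exact Int.abs_lt_one_iff.mp (by exact_mod_cast h)

namespace Real

lemma cos_eq_cos_iff_of_nonneg_of_add_lt {x y : ℝ} (hx : 0 ≤ x) (hy : 0 ≤ y)
    (hxy : x + y < 2 * π) : cos x = cos y ↔ x = y := by
  refine ⟨fun h => ?_, congrArg cos⟩
  obtain ⟨k, hk⟩ := cos_eq_cos_iff.mp h
  obtain rfl : k = 0 := Int.eq_zero_of_abs_mul_lt two_pi_pos <| abs_lt.mpr
    ⟨by rcases hk with hk | hk <;> linarith, by rcases hk with hk | hk <;> linarith⟩
  simp only [Int.cast_zero, mul_zero, zero_mul, zero_add, zero_sub] at hk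
  rcases hk with hk | hk <;> linarith

lemma cos_sub_add_cos_sub (a s t : ℝ) :
    cos (a - s) + cos (a - t) = 2 * cos (a - (s + t) / 2) * cos ((t - s) / 2) := by
  rw [cos_add_cos, show (a - s + (a - t)) / 2 = a - (s + t) / 2 by ring,
    show (a - s - (a - t)) / 2 = (t - s) / 2 by ring]

end Real

theorem stmt_11 (r₁ r₂ r₃ r₄ : ℝ) (h12 : r₁ ≤ r₂) (h23 : r₂ ≤ r₃) (h34 : r₃ ≤ r₄)
    (hmid : r₃ - r₂ < Real.pi) (hspan : r₄ - r₁ < 2 * Real.pi) :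
    Real.cos (r₁ - r₂) + Real.cos (r₁ - r₃) + Real.cos (r₂ - r₃) =
      Real.cos (r₂ - r₃) + Real.cos (r₂ - r₄) + Real.cos (r₃ - r₄) ↔
    r₂ - r₁ = r₄ - r₃ := by
  have hhalf : cos ((r₃ - r₂) / 2) ≠ 0 :=
    (cos_pos_of_mem_Ioo ⟨by linarith, by linarith⟩).ne'
  rw [add_assoc (cos (r₂ - r₃)), add_comm (cos (r₂ - r₃)), add_left_inj,
    ← cos_neg (r₂ - r₄), ← cos_neg (r₃ - r₄), neg_sub, neg_sub,
    cos_sub_add_cos_sub, cos_sub_add_cos_sub, mul_left_inj' hhalf,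
    mul_right_inj' two_ne_zero, ← cos_neg (r₁ - _), neg_sub,
    cos_eq_cos_iff_of_nonneg_of_add_lt (by linarith) (by linarith) (by linarith)]
  constructor <;> intro h <;> linarith
end
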